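/- For any two bounded functions v₁, v₂ on ℝ × (0,T] and any (x,t) with 0 < t ≤ T, the difference of the Duhamel nonlinear terms satisfies |∫₀^t∫_ℝ ((v₁² − v₂²)(s,τ)/2)(G(x,t;s,τ)h_α'(s) + G_s(x,t;s,τ)h_α(s)) ds dτ| ≤ (‖v₁‖_∞ + ‖v₂‖_∞)(‖h_α'‖_∞ √t/2 + 1/√π)·√t·‖v₁ − v₂‖_∞. -/

import Mathlib

open MeasureTheory Real

noncomputable def G (x t s τ : ℝ) : ℝ :=
  (1 / Real.sqrt (4 * Real.pi * (t - τ))) * Real.exp (-(x - s)^2 / (4 * (t - τ)))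

noncomputable def hfun (α : ℝ) (x : ℝ) : ℝ := (1 + x^2) ^ (-α)

/-
Estimate the inner integral pointwise in `τ`: the coefficient `(v₁² - v₂²)/2 = (v₁ + v₂)(v₁ - v₂)/2`
is bounded by `(N₁ + N₂) D / 2`, and since `|h_α'| ≤ H` and `0 ≤ h_α ≤ 1`, the rest is dominated by
`H G + |G_s|`. The heat kernel has mass `1`, and the first absolute moment of the Gaussian gives
`∫ |G_s| ds = 1 / √(π (t - τ))`. Integrating `H + 1 / √(π (t - τ))` over `τ ∈ (0, t)`, with
`∫₀ᵗ (t - τ)^(-1/2) dτ = 2 √t`, yields the bound.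
-/

open Set

theorem integral_Ioi_mul_exp_neg_mul_sq {b : ℝ} (hb : 0 < b) :
    ∫ r in Ioi (0 : ℝ), r * exp (-b * r ^ 2) = (2 * b)⁻¹ := by
  have h := integral_mul_cexp_neg_mul_sq (b := (b : ℂ)) (by simpa using hb)
  apply Complex.ofReal_injective
  rw [← integral_complex_ofReal]
  push_cast
  exact h

theorem integrable_abs_mul_exp_neg_mul_sq {b : ℝ} (hb : 0 < b) :
    Integrable fun u : ℝ => |u| * exp (-b * u ^ 2) := by
  refine (integrable_mul_exp_neg_mul_sq hb).abs.congr (.of_forall fun u => ?_)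
  simp only [abs_mul, abs_of_pos (exp_pos _)]

theorem integral_abs_mul_exp_neg_mul_sq {b : ℝ} (hb : 0 < b) :
    ∫ u : ℝ, |u| * exp (-b * u ^ 2) = b⁻¹ := by
  have h := integral_comp_abs (f := fun r => r * exp (-b * r ^ 2))
  simp only [sq_abs] at h
  rw [h, integral_Ioi_mul_exp_neg_mul_sq hb]
  field_simp

theorem inv_sqrt_eq_rpow {u : ℝ} (hu : 0 ≤ u) : (√u)⁻¹ = u ^ (-(1 / 2 : ℝ)) := by
  rw [sqrt_eq_rpow, rpow_neg hu]

theorem integrableOn_Ioo_inv_sqrt_sub {t : ℝ} (ht : 0 ≤ t) :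
    IntegrableOn (fun τ => (√(t - τ))⁻¹) (Ioo 0 t) := by
  have h : IntervalIntegrable (fun τ => (t - τ) ^ (-(1 / 2 : ℝ))) volume 0 t := by
    simpa using ((intervalIntegral.intervalIntegrable_rpow' (a := 0) (b := t)
      (by norm_num : -1 < -(1 / 2 : ℝ))).comp_sub_left t).symm
  refine ((intervalIntegrable_iff_integrableOn_Ioo_of_le ht).mp h).congr_fun
    (fun τ hτ => ?_) measurableSet_Ioo
  rw [inv_sqrt_eq_rpow (sub_pos.2 hτ.2).le]

theorem integral_Ioo_inv_sqrt_sub {t : ℝ} (ht : 0 ≤ t) :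
    ∫ τ in Ioo 0 t, (√(t - τ))⁻¹ = 2 * √t := by
  rw [setIntegral_congr_fun measurableSet_Ioo
      (fun τ hτ => inv_sqrt_eq_rpow (sub_pos.2 hτ.2).le),
    ← integral_Ioc_eq_integral_Ioo, ← intervalIntegral.integral_of_le ht,
    intervalIntegral.integral_comp_sub_left (fun u => u ^ (-(1 / 2 : ℝ))) t, sub_self, sub_zero,
    integral_rpow (Or.inl (by norm_num)), zero_rpow (by norm_num), sqrt_eq_rpow]
  norm_num [div_eq_mul_inv, mul_comm]

theorem abs_setIntegral_Ioo_le_of_abs_le_inv_sqrt_sub {F : ℝ → ℝ} {t A B : ℝ} (ht : 0 ≤ t)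
    (hF : ∀ τ ∈ Ioo 0 t, |F τ| ≤ A + B * (√(t - τ))⁻¹) :
    |∫ τ in Ioo 0 t, F τ| ≤ A * t + B * (2 * √t) := by
  have hA : IntegrableOn (fun _ => A) (Ioo 0 t) := integrableOn_const measure_Ioo_lt_top.ne
  have hB : IntegrableOn (fun τ => B * (√(t - τ))⁻¹) (Ioo 0 t) :=
    (integrableOn_Ioo_inv_sqrt_sub ht).const_mul B
  calc |∫ τ in Ioo 0 t, F τ| ≤ ∫ τ in Ioo 0 t, (A + B * (√(t - τ))⁻¹) :=
        norm_integral_le_of_norm_le (f := F) (hA.add hB)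
          ((ae_restrict_mem measurableSet_Ioo).mono hF)
    _ = A * t + B * (2 * √t) := by
        rw [integral_add hA hB,
          setIntegral_const, integral_const_mul, integral_Ioo_inv_sqrt_sub ht, measureReal_def,
          volume_Ioo, sub_zero, ENNReal.toReal_ofReal ht, smul_eq_mul, mul_comm t]

theorem abs_integral_mul_le_of_abs_le {α : Type*} [MeasurableSpace α] {μ : Measure α}
    {f k g : α → ℝ} {C : ℝ} (hf : ∀ s, |f s| ≤ C) (hk : ∀ s, |k s| ≤ g s) (hg : Integrable g μ) :
    |∫ s, f s * k s ∂μ| ≤ C * ∫ s, g s ∂μ := by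
  rw [← integral_const_mul C g]
  refine norm_integral_le_of_norm_le (f := fun s => f s * k s) (hg.const_mul C)
    (.of_forall fun s => ?_)
  rw [norm_mul, Real.norm_eq_abs, Real.norm_eq_abs]
  exact mul_le_mul (hf s) (hk s) (abs_nonneg _) ((abs_nonneg _).trans (hf s))

theorem abs_sq_sub_sq_div_two_le {a b N₁ N₂ D : ℝ} (ha : |a| ≤ N₁) (hb : |b| ≤ N₂)
    (hab : |a - b| ≤ D) : |(a ^ 2 - b ^ 2) / 2| ≤ (N₁ + N₂) * D / 2 := by
  have hsum : |a + b| ≤ N₁ + N₂ := (abs_add_le a b).trans (add_le_add ha hb)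
  rw [sq_sub_sq, abs_div, abs_mul, abs_two]
  exact div_le_div_of_nonneg_right
    (mul_le_mul hsum hab (abs_nonneg _) ((abs_nonneg _).trans hsum)) zero_le_two

section HeatKernel

variable (x : ℝ) {t τ : ℝ}

theorem G_eq_mul_exp (s : ℝ) :
    G x t s τ = (√(4 * π * (t - τ)))⁻¹ * exp (-(4 * (t - τ))⁻¹ * (s - x) ^ 2) := by
  rw [G, one_div]
  congr 2
  ring


theorem G_nonneg (s : ℝ) : 0 ≤ G x t s τ := by
  rw [G]; positivity

theorem hasDerivAt_G (h : τ < t) (s : ℝ) :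
    HasDerivAt (fun s' => G x t s' τ) (G x t s τ * ((x - s) / (2 * (t - τ)))) s := by
  have ha : t - τ ≠ 0 := (sub_pos.2 h).ne'
  have hexp : HasDerivAt (fun s' : ℝ => -(x - s') ^ 2 / (4 * (t - τ)))
      ((x - s) / (2 * (t - τ))) s := by
    have hsub : HasDerivAt (fun s' : ℝ => x - s') (-1) s := (hasDerivAt_id s).const_sub x
    refine ((hsub.pow 2).neg.div_const (4 * (t - τ))).congr_deriv ?_
    field_simp
    ring
  exact (hexp.exp.const_mul (1 / √(4 * π * (t - τ)))).congr_deriv (by rw [G]; ring)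

theorem abs_deriv_G (h : τ < t) (s : ℝ) :
    |deriv (fun s' => G x t s' τ) s| = G x t s τ * |x - s| / (2 * (t - τ)) := by
  rw [(hasDerivAt_G x h s).deriv, abs_mul, abs_div, abs_of_nonneg (G_nonneg x s),
    abs_of_pos (by linarith : 0 < 2 * (t - τ)), mul_div_assoc]

theorem integrable_G (h : τ < t) : Integrable fun s => G x t s τ := by
  have hb : 0 < (4 * (t - τ))⁻¹ := by have : 0 < t - τ := sub_pos.2 h; positivity
  simp_rw [G_eq_mul_exp]
  exact ((integrable_exp_neg_mul_sq hb).comp_sub_right x).const_mul _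

theorem integral_G (h : τ < t) : ∫ s, G x t s τ = 1 := by
  have ha := sub_pos.2 h
  simp_rw [G_eq_mul_exp]
  rw [integral_const_mul, integral_sub_right_eq_self (fun u => exp (-(4 * (t - τ))⁻¹ * u ^ 2)) x,
    integral_gaussian, show π / (4 * (t - τ))⁻¹ = 4 * π * (t - τ) by field_simp]
  exact inv_mul_cancel₀ (by positivity)

theorem abs_deriv_G_eq_mul_abs_exp (h : τ < t) (s : ℝ) :
    |deriv (fun s' => G x t s' τ) s| = (√(4 * π * (t - τ)))⁻¹ / (2 * (t - τ)) *
      (|s - x| * exp (-(4 * (t - τ))⁻¹ * (s - x) ^ 2)) := by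
  rw [abs_deriv_G x h, G_eq_mul_exp, abs_sub_comm]
  ring

theorem integrable_abs_deriv_G (h : τ < t) :
    Integrable fun s => |deriv (fun s' => G x t s' τ) s| := by
  have hb : 0 < (4 * (t - τ))⁻¹ := by have : 0 < t - τ := sub_pos.2 h; positivity
  simp_rw [abs_deriv_G_eq_mul_abs_exp x h]
  exact ((integrable_abs_mul_exp_neg_mul_sq hb).comp_sub_right x).const_mul _

theorem integral_abs_deriv_G (h : τ < t) :
    ∫ s, |deriv (fun s' => G x t s' τ) s| = (√(π * (t - τ)))⁻¹ := by
  have ha := sub_pos.2 h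
  have hb : 0 < (4 * (t - τ))⁻¹ := by positivity
  have hsqrt : √(4 * π * (t - τ)) = 2 * √(π * (t - τ)) := by
    rw [mul_assoc, sqrt_mul zero_le_four, show (4 : ℝ) = 2 ^ 2 by norm_num, sqrt_sq two_pos.le]
  simp_rw [abs_deriv_G_eq_mul_abs_exp x h]
  rw [integral_const_mul,
    integral_sub_right_eq_self (fun u => |u| * exp (-(4 * (t - τ))⁻¹ * u ^ 2)) x,
    integral_abs_mul_exp_neg_mul_sq hb, hsqrt]
  field_simp
  norm_num

end HeatKernel

theorem abs_hfun_le_one {α : ℝ} (hα : 0 ≤ α) (x : ℝ) : |hfun α x| ≤ 1 := by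
  rw [hfun, abs_of_nonneg (rpow_nonneg (by positivity) _)]
  exact rpow_le_one_of_one_le_of_nonpos (by nlinarith [sq_nonneg x]) (neg_nonpos.2 hα)

theorem abs_G_mul_deriv_add_deriv_G_mul_le {x t τ H : ℝ} {f : ℝ → ℝ}
    (hf' : ∀ s, |deriv f s| ≤ H) (hf : ∀ s, |f s| ≤ 1) (s : ℝ) :
    |G x t s τ * deriv f s + deriv (fun s' => G x t s' τ) s * f s| ≤
      H * G x t s τ + |deriv (fun s' => G x t s' τ) s| := by
  refine (abs_add_le _ _).trans (add_le_add ?_ ?_)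
  · rw [abs_mul, abs_of_nonneg (G_nonneg x s), mul_comm]
    exact mul_le_mul_of_nonneg_right (hf' s) (G_nonneg x s)
  · rw [abs_mul]
    exact mul_le_of_le_one_right (abs_nonneg _) (hf s)

theorem abs_integral_mul_G_mul_deriv_add_deriv_G_mul_le {x t τ C H : ℝ} (h : τ < t)
    {c f : ℝ → ℝ} (hc : ∀ s, |c s| ≤ C) (hf' : ∀ s, |deriv f s| ≤ H) (hf : ∀ s, |f s| ≤ 1) :
    |∫ s, c s * (G x t s τ * deriv f s + deriv (fun s' => G x t s' τ) s * f s)| ≤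
      C * (H + (√(π * (t - τ)))⁻¹) := by
  have hint_G := (integrable_G x h).const_mul H
  refine (abs_integral_mul_le_of_abs_le hc (abs_G_mul_deriv_add_deriv_G_mul_le hf' hf)
    (hint_G.add (integrable_abs_deriv_G x h))).trans_eq ?_
  rw [integral_add hint_G (integrable_abs_deriv_G x h), integral_const_mul, integral_G x h,
    integral_abs_deriv_G x h, mul_one]

theorem duhamel_nonlinear_difference_bound_general
    (α : ℝ) (hα : 0 < α)
    (v₁ v₂ : ℝ → ℝ → ℝ)
    (N₁ : ℝ) (hN₁ : IsLUB (Set.range fun p : ℝ × ℝ => |v₁ p.1 p.2|) N₁)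
    (N₂ : ℝ) (hN₂ : IsLUB (Set.range fun p : ℝ × ℝ => |v₂ p.1 p.2|) N₂)
    (H : ℝ) (hH : IsLUB (Set.range fun x => |deriv (hfun α) x|) H)
    (D : ℝ) (hD : IsLUB (Set.range fun p : ℝ × ℝ => |v₁ p.1 p.2 - v₂ p.1 p.2|) D)
    (x t : ℝ) (ht : 0 < t) :
    |∫ τ in Set.Ioo 0 t, ∫ s : ℝ,
        ((v₁ s τ)^2 - (v₂ s τ)^2) / 2 * (G x t s τ * deriv (hfun α) s +
          deriv (fun s' => G x t s' τ) s * hfun α s)| ≤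
      (N₁ + N₂) * (H * Real.sqrt t / 2 + 1 / Real.sqrt Real.pi) * Real.sqrt t * D := by
  have hcoef (s τ : ℝ) : |((v₁ s τ)^2 - (v₂ s τ)^2) / 2| ≤ (N₁ + N₂) * D / 2 :=
    abs_sq_sub_sq_div_two_le (hN₁.1 ⟨(s, τ), rfl⟩) (hN₂.1 ⟨(s, τ), rfl⟩) (hD.1 ⟨(s, τ), rfl⟩)
  refine (abs_setIntegral_Ioo_le_of_abs_le_inv_sqrt_sub (A := (N₁ + N₂) * D / 2 * H)
    (B := (N₁ + N₂) * D / 2 / √π) ht.le fun τ hτ => ?_).trans_eq ?_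
  · refine (abs_integral_mul_G_mul_deriv_add_deriv_G_mul_le hτ.2 (hcoef · τ)
      (fun s => hH.1 ⟨s, rfl⟩) (abs_hfun_le_one hα.le)).trans_eq ?_
    rw [sqrt_mul pi_pos.le, mul_inv]
    ring
  · linear_combination -((N₁ + N₂) * D * H / 2) * mul_self_sqrt ht.le

theorem duhamel_nonlinear_difference_bound
    (α : ℝ) (hα : 0 < α) (T : ℝ) (hT : 0 < T)
    (v₁ v₂ : ℝ → ℝ → ℝ)
    (N₁ : ℝ) (hN₁ : IsLUB (Set.range fun p : ℝ × ℝ => |v₁ p.1 p.2|) N₁)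
    (N₂ : ℝ) (hN₂ : IsLUB (Set.range fun p : ℝ × ℝ => |v₂ p.1 p.2|) N₂)
    (H : ℝ) (hH : IsLUB (Set.range fun x => |deriv (hfun α) x|) H)
    (D : ℝ) (hD : IsLUB (Set.range fun p : ℝ × ℝ => |v₁ p.1 p.2 - v₂ p.1 p.2|) D)
    (x t : ℝ) (ht : 0 < t) (htT : t ≤ T) :
    |∫ τ in Set.Ioo 0 t, ∫ s : ℝ,
        ((v₁ s τ)^2 - (v₂ s τ)^2) / 2 * (G x t s τ * deriv (hfun α) s +
          deriv (fun s' => G x t s' τ) s * hfun α s)| ≤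
      (N₁ + N₂) * (H * Real.sqrt t / 2 + 1 / Real.sqrt Real.pi) * Real.sqrt t * D :=
  duhamel_nonlinear_difference_bound_general α hα v₁ v₂ N₁ hN₁ N₂ hN₂ H hH D hD x t ht
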